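/- (Boundary values of spectral clusters on the square, upper bound) With Q = (0,π)² and notation as above, there exist δ₀, C > 0 such that for 0 < δ ≤ δ₀, s ≥ 1, and every L²(Q)-normalized spectral cluster p = Σ a_{m,n} u_{m,n} with all frequencies λ_{m,n} ∈ [s, s+δ], one has ∫_{∂Q} |p|² dS ≤ C s^{1/2}. -/

import Mathlib

/-! On an edge, say `x = t`, the trace of `p` is `∑ₙ Bₙ cos (n y)` with
`Bₙ = ∑ₘ a_{m,n} cos (m t)`, so its squared `L²` norm is at most `π ∑ₙ Bₙ²`, and by Cauchy–Schwarz
`Bₙ² ≤ Nₙ ∑ₘ a_{m,n}²`, where `Nₙ` counts the `m` with `(m, n)` in the annulus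
`s ≤ |(m, n)| ≤ s + δ`. Any two such `m` have squares differing by at most `(s + δ)² - s² ≤ 3 s`,
hence `Nₙ ≤ √(3 s) + 1 ≤ 3 √s`. Finally, orthogonality of `cos (m x) cos (n y)` turns the
normalization into `∑ a_{m,n}² ≤ 4 / π²`. -/

open Real Finset

noncomputable def cosNormSq (k : ℕ) : ℝ := if k = 0 then π else π / 2

lemma half_pi_le_cosNormSq (k : ℕ) : π / 2 ≤ cosNormSq k := by
  unfold cosNormSq; split_ifs <;> linarith [pi_pos]

lemma cosNormSq_le_pi (k : ℕ) : cosNormSq k ≤ π := by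
  unfold cosNormSq; split_ifs <;> linarith [pi_pos]

lemma integral_cos_int_mul (j : ℤ) :
    ∫ x in (0:ℝ)..π, cos (j * x) = if j = 0 then π else 0 := by
  rcases eq_or_ne j 0 with rfl | hj
  · simp
  · have hj' : (j : ℝ) ≠ 0 := Int.cast_ne_zero.mpr hj
    rw [intervalIntegral.integral_comp_mul_left (fun x => cos x) hj', integral_cos, if_neg hj,
      sin_int_mul_pi]
    simp

lemma integral_cos_mul_cos (m k : ℕ) :
    ∫ x in (0:ℝ)..π, cos (m * x) * cos (k * x) = if m = k then cosNormSq m else 0 := by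
  have product_to_sum : ∀ x : ℝ, cos (m * x) * cos (k * x)
      = (cos (((m - k : ℤ) : ℝ) * x) + cos (((m + k : ℤ) : ℝ) * x)) / 2 := fun x => by
    push_cast
    rw [sub_mul, add_mul, cos_sub, cos_add]
    ring
  simp_rw [product_to_sum]
  rw [intervalIntegral.integral_div, intervalIntegral.integral_add
      (Continuous.intervalIntegrable (by fun_prop) _ _)
      (Continuous.intervalIntegrable (by fun_prop) _ _),
    integral_cos_int_mul, integral_cos_int_mul, cosNormSq]
  rcases eq_or_ne m k with rfl | hmk
  · rcases eq_or_ne m 0 with rfl | hm <;> simp [*]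
  · have h₁ : (m - k : ℤ) ≠ 0 := by omega
    have h₂ : (m + k : ℤ) ≠ 0 := by omega
    simp [h₁, h₂, hmk]

section Parseval

variable {ι : Type*} (s : Finset ι) (b : ι → ℝ) (g : ι → ℕ)

lemma integral_sq_sum_cos_of_injOn (hg : Set.InjOn g s) :
    ∫ y in (0:ℝ)..π, (∑ i ∈ s, b i * cos (g i * y)) ^ 2 = ∑ i ∈ s, cosNormSq (g i) * b i ^ 2 := by
  simp_rw [sq, sum_mul_sum]
  rw [intervalIntegral.integral_finsetSum fun _ _ =>
    (continuous_finsetSum _ fun _ _ => by fun_prop).intervalIntegrable _ _]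
  refine sum_congr rfl fun i hi => ?_
  have hterm : ∀ j, ∫ y in (0:ℝ)..π, b i * cos (g i * y) * (b j * cos (g j * y))
      = b i * b j * if g i = g j then cosNormSq (g i) else 0 := fun j => by
    simp_rw [mul_mul_mul_comm]
    rw [intervalIntegral.integral_const_mul, integral_cos_mul_cos]
  rw [intervalIntegral.integral_finsetSum fun _ _ =>
      Continuous.intervalIntegrable (by fun_prop) _ _,
    sum_congr rfl fun j _ => hterm j, sum_eq_single_of_mem i hi fun j hj hji => ?_]
  · rw [if_pos rfl]; ring
  · rw [if_neg fun h => hji (hg hj hi h.symm), mul_zero]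

lemma sum_mul_cos_eq_sum_fiberwise (y : ℝ) :
    ∑ i ∈ s, b i * cos (g i * y) = ∑ k ∈ s.image g, (∑ i ∈ s with g i = k, b i) * cos (k * y) := by
  rw [← sum_fiberwise_of_maps_to (fun i hi => mem_image_of_mem g hi)]
  refine sum_congr rfl fun k _ => ?_
  rw [sum_mul]
  exact sum_congr rfl fun i hi => by rw [(mem_filter.mp hi).2]

lemma integral_sq_sum_cos :
    ∫ y in (0:ℝ)..π, (∑ i ∈ s, b i * cos (g i * y)) ^ 2
      = ∑ k ∈ s.image g, cosNormSq k * (∑ i ∈ s with g i = k, b i) ^ 2 := by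
  simp_rw [sum_mul_cos_eq_sum_fiberwise s b g]
  exact integral_sq_sum_cos_of_injOn _ _ (fun k => k) (Set.injOn_id _)

lemma integral_sq_sum_cos_le {K : ℝ} (hK : ∀ k, (#{i ∈ s | g i = k} : ℝ) ≤ K) :
    ∫ y in (0:ℝ)..π, (∑ i ∈ s, b i * cos (g i * y)) ^ 2 ≤ π * K * ∑ i ∈ s, b i ^ 2 := by
  rw [integral_sq_sum_cos, ← sum_fiberwise_of_maps_to (fun i hi => mem_image_of_mem g hi), mul_sum]
  refine sum_le_sum fun k _ => ?_
  calc cosNormSq k * (∑ i ∈ s with g i = k, b i) ^ 2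
      ≤ π * (#{i ∈ s | g i = k} * ∑ i ∈ s with g i = k, b i ^ 2) :=
        mul_le_mul (cosNormSq_le_pi k) sq_sum_le_card_mul_sum_sq (by positivity) pi_pos.le
    _ ≤ π * K * ∑ i ∈ s with g i = k, b i ^ 2 := by
        rw [mul_assoc]; gcongr; exact hK k

end Parseval

lemma injOn_fst_filter_snd_eq {α β : Type*} (A : Finset (α × β)) (b : β) [DecidableEq β] :
    Set.InjOn Prod.fst (↑{i ∈ A | i.2 = b} : Set (α × β)) := fun i hi j hj h => by
  rw [coe_filter] at hi hj
  exact Prod.ext h (hi.2.trans hj.2.symm)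

lemma injOn_snd_filter_fst_eq {α β : Type*} (A : Finset (α × β)) (a : α) [DecidableEq α] :
    Set.InjOn Prod.snd (↑{i ∈ A | i.1 = a} : Set (α × β)) := fun i hi j hj h => by
  rw [coe_filter] at hi hj
  exact Prod.ext (hi.2.trans hj.2.symm) h

lemma integral_integral_sq_sum_cos_mul_cos (A : Finset (ℕ × ℕ)) (a : ℕ × ℕ → ℝ) :
    ∫ x in (0:ℝ)..π, ∫ y in (0:ℝ)..π, (∑ i ∈ A, a i * cos (i.1 * x) * cos (i.2 * y)) ^ 2
      = ∑ i ∈ A, cosNormSq i.1 * cosNormSq i.2 * a i ^ 2 := by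
  simp_rw [integral_sq_sum_cos A (fun i => a i * cos (i.1 * _)) Prod.snd]
  rw [intervalIntegral.integral_finsetSum fun _ _ =>
      Continuous.intervalIntegrable (by fun_prop) _ _,
    ← sum_fiberwise_of_maps_to fun i hi => mem_image_of_mem Prod.snd hi]
  refine sum_congr rfl fun n _ => ?_
  rw [intervalIntegral.integral_const_mul,
    integral_sq_sum_cos_of_injOn _ _ _ (injOn_fst_filter_snd_eq A n), mul_sum]
  refine sum_congr rfl fun i hi => ?_
  rw [(mem_filter.mp hi).2]
  ring

lemma sq_half_pi_mul_sum_sq_le_integral_integral_sq (A : Finset (ℕ × ℕ)) (a : ℕ × ℕ → ℝ) :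
    (π / 2) ^ 2 * ∑ i ∈ A, a i ^ 2
      ≤ ∫ x in (0:ℝ)..π, ∫ y in (0:ℝ)..π, (∑ i ∈ A, a i * cos (i.1 * x) * cos (i.2 * y)) ^ 2 := by
  rw [integral_integral_sq_sum_cos_mul_cos, mul_sum]
  refine sum_le_sum fun i _ => mul_le_mul_of_nonneg_right ?_ (sq_nonneg _)
  rw [sq]
  exact mul_le_mul (half_pi_le_cosNormSq _) (half_pi_le_cosNormSq _) (by positivity)
    (by linarith [half_pi_le_cosNormSq i.1, pi_pos])

lemma card_le_sqrt_add_one_of_sq_sub_sq_le (B : Finset ℕ) {D : ℝ}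
    (h : ∀ m ∈ B, ∀ k ∈ B, (m : ℝ) ^ 2 - k ^ 2 ≤ D) : (#B : ℝ) ≤ √D + 1 := by
  rcases B.eq_empty_or_nonempty with rfl | hB
  · simp only [card_empty, Nat.cast_zero]
    positivity
  set M := B.max' hB
  set m := B.min' hB
  have hmM : m ≤ M := min'_le_max' B hB
  have hcard : (#B : ℝ) ≤ M - m + 1 := by
    have h := card_le_card (show B ⊆ Icc m M from
      fun k hk => mem_Icc.mpr ⟨min'_le B k hk, le_max' B k hk⟩)
    rw [Nat.card_Icc] at h
    calc (#B : ℝ) ≤ ((M + 1 - m : ℕ) : ℝ) := by exact_mod_cast h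
      _ = M - m + 1 := by rw [Nat.cast_sub (by omega)]; push_cast; ring
  have hD := h M (max'_mem B hB) m (min'_mem B hB)
  have hmM' : (m : ℝ) ≤ M := by exact_mod_cast hmM
  have hspread : (M : ℝ) - m ≤ √D :=
    (le_sqrt (by linarith) (by nlinarith)).mpr (by nlinarith [m.cast_nonneg (α := ℝ)])
  linarith

lemma card_le_of_mem_annulus {ι : Type*} (B : Finset ι) (f : ι → ℕ) (hf : Set.InjOn f B)
    (c : ℝ) {s δ : ℝ} (hs : 1 ≤ s) (hδ₀ : 0 ≤ δ) (hδ₁ : δ ≤ 1)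
    (hB : ∀ i ∈ B, s ^ 2 ≤ (f i : ℝ) ^ 2 + c ∧ (f i : ℝ) ^ 2 + c ≤ (s + δ) ^ 2) :
    (#B : ℝ) ≤ 3 * √s := by
  have hwidth : ∀ m ∈ B.image f, ∀ k ∈ B.image f, (m : ℝ) ^ 2 - k ^ 2 ≤ 3 * s := by
    simp only [mem_image]
    rintro _ ⟨i, hi, rfl⟩ _ ⟨j, hj, rfl⟩
    nlinarith [hB i hi, hB j hj]
  have hsqrt : √(3 * s) ≤ 2 * √s := by
    rw [sqrt_mul' _ (by linarith)]
    gcongr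
    rw [sqrt_le_left] <;> norm_num
  have hs' : 1 ≤ √s := one_le_sqrt.mpr hs
  calc (#B : ℝ) = #(B.image f) := by rw [card_image_of_injOn hf]
    _ ≤ √(3 * s) + 1 := card_le_sqrt_add_one_of_sq_sub_sq_le _ hwidth
    _ ≤ 3 * √s := by linarith

lemma integral_sq_sum_mul_cos_mul_cos_le {ι : Type*} (s : Finset ι) (a : ι → ℝ) (f g : ι → ℕ)
    (t : ℝ) {K : ℝ} (hK : ∀ k, (#{i ∈ s | g i = k} : ℝ) ≤ K) :
    ∫ y in (0:ℝ)..π, (∑ i ∈ s, a i * cos (f i * t) * cos (g i * y)) ^ 2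
      ≤ π * K * ∑ i ∈ s, a i ^ 2 := by
  have hK₀ : 0 ≤ K := (Nat.cast_nonneg _).trans (hK 0)
  refine (integral_sq_sum_cos_le s (fun i => a i * cos (f i * t)) g hK).trans ?_
  refine mul_le_mul_of_nonneg_left (sum_le_sum fun i _ => ?_) (by positivity)
  rw [mul_pow]
  exact mul_le_of_le_one_right (sq_nonneg _) (sq_le_one_iff_abs_le_one _ |>.mpr (abs_cos_le_one _))

section Cluster

variable (A : Finset (ℕ × ℕ)) (a : ℕ × ℕ → ℝ) {s δ : ℝ} (hs : 1 ≤ s) (hδ₀ : 0 ≤ δ) (hδ₁ : δ ≤ 1)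
  (hA : ∀ i ∈ A, s ^ 2 ≤ (i.1 : ℝ) ^ 2 + i.2 ^ 2 ∧ (i.1 : ℝ) ^ 2 + i.2 ^ 2 ≤ (s + δ) ^ 2)
include hs hδ₀ hδ₁ hA

lemma integral_sq_sum_cos_mul_cos_vertical_le (t : ℝ) :
    ∫ y in (0:ℝ)..π, (∑ i ∈ A, a i * cos (i.1 * t) * cos (i.2 * y)) ^ 2
      ≤ π * (3 * √s) * ∑ i ∈ A, a i ^ 2 :=
  integral_sq_sum_mul_cos_mul_cos_le A a Prod.fst Prod.snd t fun n =>
    card_le_of_mem_annulus _ Prod.fst (injOn_fst_filter_snd_eq A n) ((n : ℝ) ^ 2) hs hδ₀ hδ₁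
      fun i hi => by
        obtain ⟨hiA, rfl⟩ := mem_filter.mp hi
        exact hA i hiA

lemma integral_sq_sum_cos_mul_cos_horizontal_le (t : ℝ) :
    ∫ x in (0:ℝ)..π, (∑ i ∈ A, a i * cos (i.1 * x) * cos (i.2 * t)) ^ 2
      ≤ π * (3 * √s) * ∑ i ∈ A, a i ^ 2 := by
  have hswap : ∀ x, ∑ i ∈ A, a i * cos (i.1 * x) * cos (i.2 * t)
      = ∑ i ∈ A, a i * cos (i.2 * t) * cos (i.1 * x) := fun x =>
    sum_congr rfl fun i _ => mul_right_comm _ _ _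
  simp_rw [hswap]
  exact integral_sq_sum_mul_cos_mul_cos_le A a Prod.snd Prod.fst t fun m =>
    card_le_of_mem_annulus _ Prod.snd (injOn_snd_filter_fst_eq A m) ((m : ℝ) ^ 2) hs hδ₀ hδ₁
      fun i hi => by
        obtain ⟨hiA, rfl⟩ := mem_filter.mp hi
        rw [add_comm]
        exact hA i hiA

end Cluster

/-- boundary values of spectral clusters on the square, upper bound:
on `Q = (0,π)²`, there are `δ₀, C > 0` such that for `0 < δ ≤ δ₀`, `s ≥ 1`, every
`L²(Q)`-normalized spectral cluster `p = Σ a_{m,n} cos(mx)cos(ny)` with all frequencies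
`√(m²+n²)` in `[s, s+δ]` satisfies `∫_{∂Q} |p|² dS ≤ C s^{1/2}`. -/
theorem stmt_13 :
    ∃ δ₀ : ℝ, 0 < δ₀ ∧ ∃ C : ℝ, 0 < C ∧
      ∀ δ : ℝ, 0 < δ → δ ≤ δ₀ → ∀ s : ℝ, 1 ≤ s →
      ∀ (A : Finset (ℕ × ℕ)) (a : ℕ × ℕ → ℝ),
        (∀ mn ∈ A, a mn ≠ 0 →
          s ≤ Real.sqrt ((mn.1 : ℝ)^2 + (mn.2 : ℝ)^2) ∧
          Real.sqrt ((mn.1 : ℝ)^2 + (mn.2 : ℝ)^2) ≤ s + δ) →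
        (∀ p : ℝ → ℝ → ℝ,
          (∀ x y : ℝ, p x y = ∑ mn ∈ A, a mn * Real.cos (mn.1 * x) * Real.cos (mn.2 * y)) →
          (∫ x in (0:ℝ)..π, ∫ y in (0:ℝ)..π, (p x y)^2) = 1 →
          (∫ y in (0:ℝ)..π, (p 0 y)^2 + (p π y)^2) +
            (∫ x in (0:ℝ)..π, (p x 0)^2 + (p x π)^2) ≤ C * Real.sqrt s) := by
  refine ⟨1, one_pos, 16, by norm_num, fun δ hδ₀ hδ₁ s hs A a hfreq p hp hnorm => ?_⟩
  classical
  set A' := {i ∈ A | a i ≠ 0}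
  have hp' : ∀ x y, p x y = ∑ i ∈ A', a i * cos (i.1 * x) * cos (i.2 * y) := fun x y => by
    rw [hp, sum_filter_of_ne fun i _ h => left_ne_zero_of_mul (left_ne_zero_of_mul h)]
  have hA' : ∀ i ∈ A', s ^ 2 ≤ (i.1 : ℝ) ^ 2 + i.2 ^ 2 ∧ (i.1 : ℝ) ^ 2 + i.2 ^ 2 ≤ (s + δ) ^ 2 := by
    intro i hi
    obtain ⟨hi, ha⟩ := mem_filter.mp hi
    obtain ⟨hlo, hhi⟩ := hfreq i hi ha
    exact ⟨(le_sqrt (by linarith) (by positivity)).mp hlo, (sqrt_le_iff.mp hhi).2⟩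
  have hcoeff : π * (3 * √s) * ∑ i ∈ A', a i ^ 2 ≤ 4 * √s := by
    have hsum := sq_half_pi_mul_sum_sq_le_integral_integral_sq A' a
    simp_rw [← hp', hnorm] at hsum
    have hS : 3 * π * ∑ i ∈ A', a i ^ 2 ≤ 4 := by
      nlinarith [pi_gt_three, sum_nonneg fun i (_ : i ∈ A') => sq_nonneg (a i)]
    nlinarith [mul_le_mul_of_nonneg_left hS (sqrt_nonneg s)]
  have hvertical := integral_sq_sum_cos_mul_cos_vertical_le A' a hs hδ₀.le hδ₁ hA'
  have hhorizontal := integral_sq_sum_cos_mul_cos_horizontal_le A' a hs hδ₀.le hδ₁ hA'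
  simp_rw [hp']
  rw [intervalIntegral.integral_add (Continuous.intervalIntegrable (by fun_prop) _ _)
      (Continuous.intervalIntegrable (by fun_prop) _ _),
    intervalIntegral.integral_add (Continuous.intervalIntegrable (by fun_prop) _ _)
      (Continuous.intervalIntegrable (by fun_prop) _ _)]
  linarith [hvertical 0, hvertical π, hhorizontal 0, hhorizontal π]
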